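/- arXiv:1302.0262 — 6 statements merged into one kernel-verified Lean document; each statement's English description precedes it below -/
import Mathlib

section
/- Under the modified DQM condition, n^{-1/2} Σ_{i=1}^n R_i · v_ξ(X_i)/f₀(X_i) = o_P(1) and, componentwise, n^{-1/2} Σ_{i=1}^n R_i · v_θ(X_i)/f₀(X_i) = o_P(1) under the null product law P_{n,ξ₀,θ}. -/
open MeasureTheory Filter Topology Asymptotics
open scoped ENNReal

/-!
Write `w` for `v_ξ` or a component of `v_θ`. Under the null, the summands
`Rᵢ · w(Xᵢ)/f₀(Xᵢ)` have first absolute moment `∫ |rₙ w| dμ ≤ ‖rₙ‖₂ ‖w‖₂`: the density `f₀²`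
cancels the two divisions by `f₀`. Markov's inequality therefore bounds the probability that
`n^{-1/2} |∑ᵢ …|` exceeds `ε` by `√n ‖rₙ‖₂ ‖w‖₂ / ε`. Along the local sequence
`‖hₙ‖² = (δ₁⁴ + |δ₂|²)/n`, so the DQM condition gives `n ‖rₙ‖₂² → 0`.
-/

theorem natCast_rpow_neg_inv_pow (n k : ℕ) (hk : k ≠ 0) :
    ((n : ℝ) ^ (-(1 / k : ℝ))) ^ k = (n : ℝ)⁻¹ := by
  rw [← Real.rpow_mul_natCast n.cast_nonneg, neg_mul, one_div_mul_cancel (by exact_mod_cast hk),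
    Real.rpow_neg_one]

theorem tendsto_add_mul_natCast_rpow_neg (a b : ℝ) {s : ℝ} (hs : 0 < s) :
    Tendsto (fun n : ℕ => a + b * (n : ℝ) ^ (-s)) atTop (𝓝 a) := by
  simpa using tendsto_const_nhds.add
    (((tendsto_rpow_neg_atTop hs).comp tendsto_natCast_atTop_atTop).const_mul b)

theorem tendsto_natCast_mul_comp_of_isLittleO {α : Type*} {l : Filter α} {f g : α → ℝ}
    (hfg : f =o[l] g) {u : ℕ → α} (hu : Tendsto u atTop l)
    (hg : (fun n : ℕ => (n : ℝ) * g (u n)) =O[atTop] fun _ => (1 : ℝ)) :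
    Tendsto (fun n : ℕ => (n : ℝ) * f (u n)) atTop (𝓝 0) :=
  (isLittleO_one_iff ℝ).1
    (((isBigO_refl _ _).mul_isLittleO (hfg.comp_tendsto hu)).trans_isBigO hg)

theorem ofReal_mul_enorm_div_sqrt_mul_div_sqrt_le (p r w : ℝ) :
    ENNReal.ofReal p * ‖r / √p * (w / √p)‖ₑ ≤ ‖r * w‖ₑ := by
  rcases le_or_gt p 0 with hp | hp
  · simp [ENNReal.ofReal_of_nonpos hp]
  · rw [Real.enorm_eq_ofReal_abs, Real.enorm_eq_ofReal_abs, ← ENNReal.ofReal_mul hp.le,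
      ← abs_of_pos hp, ← abs_mul, abs_of_pos hp, div_mul_div_comm, ← sq,
      Real.sq_sqrt hp.le, mul_div_cancel₀ _ hp.ne']

section Density

variable {X : Type*} [MeasurableSpace X] {μ : Measure X}

theorem memLp_two_sqrt {p : X → ℝ} (hp : Integrable p μ) : MemLp (fun x => √(p x)) 2 μ := by
  refine (memLp_two_iff_integrable_sq
    (Real.continuous_sqrt.comp_aestronglyMeasurable hp.aestronglyMeasurable)).2 ?_
  simpa only [Real.sq_sqrt'] using hp.pos_part

theorem MeasureTheory.MemLp.eLpNorm_two_eq_ofReal_sqrt {f : X → ℝ} (hf : MemLp f 2 μ) :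
    eLpNorm f 2 μ = ENNReal.ofReal √(∫ x, f x ^ 2 ∂μ) := by
  rw [hf.eLpNorm_eq_integral_rpow_norm two_ne_zero ENNReal.ofNat_ne_top, Real.sqrt_eq_rpow]
  norm_num

theorem isProbabilityMeasure_withDensity_ofReal {p : X → ℝ} (hp0 : 0 ≤ᵐ[μ] p)
    (hp1 : ∫ x, p x ∂μ = 1) :
    IsProbabilityMeasure (μ.withDensity fun x => ENNReal.ofReal (p x)) := by
  constructor
  rw [withDensity_apply _ MeasurableSet.univ, Measure.restrict_univ,
    ← ofReal_integral_eq_lintegral_ofReal (integrable_of_integral_eq_one hp1) hp0, hp1,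
    ENNReal.ofReal_one]

theorem lintegral_enorm_div_sqrt_mul_div_sqrt_withDensity_le {p r w : X → ℝ}
    (hp : AEMeasurable p μ) (hr : AEStronglyMeasurable r μ) (hw : AEStronglyMeasurable w μ) :
    ∫⁻ x, ‖r x / √(p x) * (w x / √(p x))‖ₑ ∂(μ.withDensity fun x => ENNReal.ofReal (p x))
      ≤ eLpNorm r 2 μ * eLpNorm w 2 μ := by
  rw [lintegral_withDensity_eq_lintegral_mul_non_measurable₀ _ hp.ennreal_ofReal
    (ae_of_all _ fun _ => ENNReal.ofReal_lt_top)]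
  calc ∫⁻ x, ENNReal.ofReal (p x) * ‖r x / √(p x) * (w x / √(p x))‖ₑ ∂μ
      ≤ ∫⁻ x, ‖r x * w x‖ₑ ∂μ :=
        lintegral_mono fun x => ofReal_mul_enorm_div_sqrt_mul_div_sqrt_le _ _ _
    _ = eLpNorm (fun x => r x * w x) 1 μ := eLpNorm_one_eq_lintegral_enorm.symm
    _ ≤ eLpNorm r 2 μ * eLpNorm w 2 μ := by
        simpa using eLpNorm_le_eLpNorm_mul_eLpNorm'_of_norm hr hw (· * ·) 1
          (ae_of_all _ fun x => by simp [norm_mul]) (p := 2) (q := 2) (r := 1)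

end Density

section IidSums

variable {X ι : Type*} [MeasurableSpace X] [Fintype ι] (ν : Measure X) [IsProbabilityMeasure ν]

theorem lintegral_pi_comp_eval (i : ι) {F : X → ℝ≥0∞} (hF : AEMeasurable F ν) :
    ∫⁻ ω, F (ω i) ∂(Measure.pi fun _ : ι => ν) = ∫⁻ x, F x ∂ν := by
  have h := measurePreserving_eval (fun _ : ι => ν) i
  have := lintegral_map' (f := F) (by rwa [h.map_eq]) h.measurable.aemeasurable
  rw [h.map_eq] at this
  exact this.symm

theorem lintegral_enorm_sum_comp_eval_le {g : X → ℝ} (hg : AEMeasurable g ν) :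
    ∫⁻ ω, ‖∑ i, g (ω i)‖ₑ ∂(Measure.pi fun _ : ι => ν)
      ≤ Fintype.card ι * ∫⁻ x, ‖g x‖ₑ ∂ν := by
  have hgi (i : ι) : AEMeasurable (fun ω : ι → X => ‖g (ω i)‖ₑ) (Measure.pi fun _ => ν) :=
    hg.enorm.comp_quasiMeasurePreserving
      (measurePreserving_eval (fun _ : ι => ν) i).quasiMeasurePreserving
  calc ∫⁻ ω, ‖∑ i, g (ω i)‖ₑ ∂(Measure.pi fun _ : ι => ν)
      ≤ ∫⁻ ω, ∑ i, ‖g (ω i)‖ₑ ∂(Measure.pi fun _ : ι => ν) :=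
        lintegral_mono fun ω => enorm_sum_le _ _
    _ = ∑ _i : ι, ∫⁻ x, ‖g x‖ₑ ∂ν := by
        rw [lintegral_finsetSum' _ fun i _ => hgi i]
        exact Finset.sum_congr rfl fun i _ => lintegral_pi_comp_eval ν i hg.enorm
    _ = Fintype.card ι * ∫⁻ x, ‖g x‖ₑ ∂ν := by
        rw [Finset.sum_const, Finset.card_univ, nsmul_eq_mul]

theorem tendsto_pi_measure_abs_inv_sqrt_mul_sum_gt {g : ℕ → X → ℝ}
    (hg : ∀ n, AEMeasurable (g n) ν)
    (hlim : Tendsto (fun n : ℕ => ENNReal.ofReal √n * ∫⁻ x, ‖g n x‖ₑ ∂ν) atTop (𝓝 0))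
    {ε : ℝ} (hε : 0 < ε) :
    Tendsto (fun n : ℕ => (Measure.pi fun _ : Fin n => ν)
      {ω | ε < |(√n)⁻¹ * ∑ i, g n (ω i)|}) atTop (𝓝 0) := by
  have hmarkov (n : ℕ) : (Measure.pi fun _ : Fin n => ν) {ω | ε < |(√n)⁻¹ * ∑ i, g n (ω i)|}
      ≤ ENNReal.ofReal √n * (∫⁻ x, ‖g n x‖ₑ ∂ν) / ENNReal.ofReal ε := by
    set π := Measure.pi fun _ : Fin n => ν
    have hS : AEMeasurable (fun ω : Fin n → X => ‖(√n)⁻¹ * ∑ i, g n (ω i)‖ₑ) π :=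
      (aemeasurable_const.mul (Finset.aemeasurable_fun_sum _ fun i _ =>
        (hg n).comp_quasiMeasurePreserving
          (measurePreserving_eval (fun _ : Fin n => ν) i).quasiMeasurePreserving)).enorm
    calc π {ω | ε < |(√n)⁻¹ * ∑ i, g n (ω i)|}
        ≤ π {ω | ENNReal.ofReal ε ≤ ‖(√n)⁻¹ * ∑ i, g n (ω i)‖ₑ} := by
          refine measure_mono fun ω hω => ?_
          simpa only [Set.mem_ofPred_eq, Real.enorm_eq_ofReal_abs] using
            ENNReal.ofReal_le_ofReal hω.le
      _ ≤ (∫⁻ ω, ‖(√n)⁻¹ * ∑ i, g n (ω i)‖ₑ ∂π) / ENNReal.ofReal ε :=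
          meas_ge_le_lintegral_div hS (by simpa using hε) ENNReal.ofReal_ne_top
      _ ≤ ENNReal.ofReal √n * (∫⁻ x, ‖g n x‖ₑ ∂ν) / ENNReal.ofReal ε := by
          gcongr
          calc ∫⁻ ω, ‖(√n)⁻¹ * ∑ i, g n (ω i)‖ₑ ∂π
              = ‖(√n)⁻¹‖ₑ * ∫⁻ ω, ‖∑ i, g n (ω i)‖ₑ ∂π := by
                simp_rw [enorm_mul]
                exact lintegral_const_mul' _ _ enorm_ne_top
            _ ≤ ‖(√n)⁻¹‖ₑ * (n * ∫⁻ x, ‖g n x‖ₑ ∂ν) := by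
                grw [lintegral_enorm_sum_comp_eval_le ν (hg n), Fintype.card_fin]
            _ = ENNReal.ofReal √n * ∫⁻ x, ‖g n x‖ₑ ∂ν := by
                rw [← mul_assoc, Real.enorm_of_nonneg (by positivity), ← ENNReal.ofReal_natCast,
                  ← ENNReal.ofReal_mul (by positivity), inv_mul_eq_div, Real.div_sqrt]
  refine tendsto_of_tendsto_of_tendsto_of_le_of_le tendsto_const_nhds ?_ (fun _ => bot_le)
    hmarkov
  simpa using ENNReal.Tendsto.div_const hlim (Or.inr (by simpa using hε))

end IidSums

theorem tendsto_pi_withDensity_abs_inv_sqrt_mul_sum_gt {X : Type*} [MeasurableSpace X]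
    {μ : Measure X} {p w : X → ℝ} {r : ℕ → X → ℝ} (hp0 : 0 ≤ᵐ[μ] p) (hp1 : ∫ x, p x ∂μ = 1)
    (hw : MemLp w 2 μ) (hr : ∀ n, MemLp (r n) 2 μ)
    (hlim : Tendsto (fun n : ℕ => (n : ℝ) * ∫ x, r n x ^ 2 ∂μ) atTop (𝓝 0))
    {ε : ℝ} (hε : 0 < ε) :
    Tendsto (fun n : ℕ => (Measure.pi fun _ : Fin n => μ.withDensity fun x => ENNReal.ofReal (p x))
      {ω | ε < |(√n)⁻¹ * ∑ i, (r n (ω i) / √(p (ω i))) * (w (ω i) / √(p (ω i)))|})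
      atTop (𝓝 0) := by
  have hp : AEMeasurable p μ := (integrable_of_integral_eq_one hp1).aemeasurable
  have := isProbabilityMeasure_withDensity_ofReal hp0 hp1
  have hrn : Tendsto (fun n : ℕ => ENNReal.ofReal √n * eLpNorm (r n) 2 μ) atTop (𝓝 0) := by
    simp_rw [fun n => (hr n).eLpNorm_two_eq_ofReal_sqrt, ← ENNReal.ofReal_mul (Real.sqrt_nonneg _),
      ← Real.sqrt_mul (Nat.cast_nonneg _)]
    simpa using ENNReal.tendsto_ofReal ((Real.continuous_sqrt.tendsto 0).comp hlim)
  refine tendsto_pi_measure_abs_inv_sqrt_mul_sum_gt _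
    (g := fun n x => r n x / √(p x) * (w x / √(p x))) (fun n => ?_) ?_ hε
  · exact (((hr n).1.aemeasurable.div hp.sqrt).mul (hw.1.aemeasurable.div hp.sqrt)).mono'
      (withDensity_absolutelyContinuous _ _)
  refine tendsto_of_tendsto_of_tendsto_of_le_of_le tendsto_const_nhds
    (by simpa using ENNReal.Tendsto.mul_const hrn (Or.inr hw.eLpNorm_ne_top))
    (fun _ => bot_le) fun n => ?_
  grw [mul_assoc, lintegral_enorm_div_sqrt_mul_div_sqrt_withDensity_le hp (hr n).1 hw.1]

theorem cross_terms_remainder_tendsto_zero_general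
    {𝒳 : Type*} [MeasurableSpace 𝒳] (μ : Measure 𝒳)
    {P : ℕ} (p : ℝ → (Fin P → ℝ) → 𝒳 → ℝ)
    (ξ₀ : ℝ) (θ : Fin P → ℝ)
    (hnonneg : ∀ ξ' θ' x, 0 ≤ p ξ' θ' x)
    (hprob : ∀ ξ' θ', ∫ x, p ξ' θ' x ∂μ = 1)
    (vξ : 𝒳 → ℝ) (vθ : 𝒳 → Fin P → ℝ)
    (hvξ : MemLp vξ 2 μ) (hvθ : ∀ j, MemLp (fun x => vθ x j) 2 μ)
    (hDQM : (fun q : ℝ × (Fin P → ℝ) =>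
        ∫ x, (Real.sqrt (p q.1 q.2 x) - Real.sqrt (p ξ₀ θ x)
          - ((q.1 - ξ₀) ^ 2 * vξ x + ∑ j, (q.2 j - θ j) * vθ x j)) ^ 2 ∂μ)
        =o[𝓝 (ξ₀, θ)]
        (fun q : ℝ × (Fin P → ℝ) => (q.1 - ξ₀) ^ 4 + ∑ j, (q.2 j - θ j) ^ 2))
    (δ₁ : ℝ) (δ₂ : Fin P → ℝ)
    (ξn : ℕ → ℝ) (hξn : ∀ n, ξn n = ξ₀ + δ₁ * (n : ℝ) ^ (-(1 / 4 : ℝ)))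
    (θn : ℕ → Fin P → ℝ)
    (hθn : ∀ n j, θn n j = θ j + δ₂ j * (n : ℝ) ^ (-(1 / 2 : ℝ)))
    (r : ℕ → 𝒳 → ℝ)
    (hr : ∀ n x, r n x = Real.sqrt (p (ξn n) (θn n) x) - Real.sqrt (p ξ₀ θ x)
          - ((ξn n - ξ₀) ^ 2 * vξ x + ∑ j, (θn n j - θ j) * vθ x j))
    :
    ∀ ε > (0 : ℝ),
      (Tendsto (fun n : ℕ =>
        (Measure.pi fun _ : Fin n => μ.withDensity fun x => ENNReal.ofReal (p ξ₀ θ x))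
          {ω | ε < |(Real.sqrt n)⁻¹ * ∑ i,
            (r n (ω i) / Real.sqrt (p ξ₀ θ (ω i))) * (vξ (ω i) / Real.sqrt (p ξ₀ θ (ω i)))|})
        atTop (𝓝 0)) ∧
      (∀ j : Fin P, Tendsto (fun n : ℕ =>
        (Measure.pi fun _ : Fin n => μ.withDensity fun x => ENNReal.ofReal (p ξ₀ θ x))
          {ω | ε < |(Real.sqrt n)⁻¹ * ∑ i,
            (r n (ω i) / Real.sqrt (p ξ₀ θ (ω i))) * (vθ (ω i) j / Real.sqrt (p ξ₀ θ (ω i)))|})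
        atTop (𝓝 0)) := by
  intro ε hε
  have hsqrt ξ' θ' := memLp_two_sqrt (integrable_of_integral_eq_one (hprob ξ' θ'))
  have hrL2 n : MemLp (r n) 2 μ := by
    rw [show r n = _ from funext (hr n)]
    exact ((hsqrt _ _).sub (hsqrt _ _)).sub ((hvξ.const_mul _).add
      (memLp_finsetSum _ fun j _ => (hvθ j).const_mul _))
  have hseq : Tendsto (fun n => (ξn n, θn n)) atTop (𝓝 (ξ₀, θ)) := by
    simp only [funext hξn, funext fun n => funext (hθn n)]
    exact (tendsto_add_mul_natCast_rpow_neg _ _ (by norm_num)).prodMk_nhds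
      (tendsto_pi_nhds.2 fun j => tendsto_add_mul_natCast_rpow_neg _ _ (by norm_num))
  have hscale n : (ξn n - ξ₀) ^ 4 + ∑ j, (θn n j - θ j) ^ 2
      = (δ₁ ^ 4 + ∑ j, δ₂ j ^ 2) * (n : ℝ)⁻¹ := by
    have h4 := natCast_rpow_neg_inv_pow n 4 (by norm_num)
    have h2 := natCast_rpow_neg_inv_pow n 2 (by norm_num)
    push_cast at h4 h2
    simp only [hξn, hθn, add_sub_cancel_left, mul_pow, h4, h2, ← Finset.sum_mul, add_mul]
  have hbdd : (fun n : ℕ => (n : ℝ) * ((ξn n - ξ₀) ^ 4 + ∑ j, (θn n j - θ j) ^ 2))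
      =O[atTop] fun _ => (1 : ℝ) := by
    refine (isBigO_const_const (δ₁ ^ 4 + ∑ j, δ₂ j ^ 2) one_ne_zero atTop).congr' ?_ .rfl
    filter_upwards [eventually_ne_atTop 0] with n hn
    rw [hscale, mul_comm, mul_assoc, inv_mul_cancel₀ (by exact_mod_cast hn), mul_one]
  have hlim : Tendsto (fun n : ℕ => (n : ℝ) * ∫ x, r n x ^ 2 ∂μ) atTop (𝓝 0) := by
    refine (tendsto_natCast_mul_comp_of_isLittleO hDQM hseq hbdd).congr fun n => ?_
    simp only [hr]
  have hp₀ : 0 ≤ᵐ[μ] p ξ₀ θ := ae_of_all _ (hnonneg ξ₀ θ)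
  exact ⟨tendsto_pi_withDensity_abs_inv_sqrt_mul_sum_gt hp₀ (hprob ξ₀ θ) hvξ hrL2 hlim hε,
    fun j => tendsto_pi_withDensity_abs_inv_sqrt_mul_sum_gt hp₀ (hprob ξ₀ θ) (hvθ j) hrL2 hlim hε⟩

/-- Under the modified DQM condition,
`n^{-1/2} ∑ᵢ Rᵢ · v_ξ(Xᵢ)/f₀(Xᵢ) = o_P(1)` and componentwise
`n^{-1/2} ∑ᵢ Rᵢ · v_θ(Xᵢ)/f₀(Xᵢ) = o_P(1)` under the null product law. -/
theorem cross_terms_remainder_tendsto_zero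
    {𝒳 : Type*} [MeasurableSpace 𝒳] (μ : Measure 𝒳) [SigmaFinite μ]
    {P : ℕ} (p : ℝ → (Fin P → ℝ) → 𝒳 → ℝ)
    (ξ₀ : ℝ) (θ : Fin P → ℝ)
    (hmeas : ∀ ξ' θ', Measurable (p ξ' θ'))
    (hnonneg : ∀ ξ' θ' x, 0 ≤ p ξ' θ' x)
    (hprob : ∀ ξ' θ', ∫ x, p ξ' θ' x ∂μ = 1)
    (vξ : 𝒳 → ℝ) (vθ : 𝒳 → Fin P → ℝ)
    (hvξmeas : Measurable vξ) (hvθmeas : ∀ j, Measurable fun x => vθ x j)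
    (hvξ : MemLp vξ 2 μ) (hvθ : ∀ j, MemLp (fun x => vθ x j) 2 μ)
    (hDQM : (fun q : ℝ × (Fin P → ℝ) =>
        ∫ x, (Real.sqrt (p q.1 q.2 x) - Real.sqrt (p ξ₀ θ x)
          - ((q.1 - ξ₀) ^ 2 * vξ x + ∑ j, (q.2 j - θ j) * vθ x j)) ^ 2 ∂μ)
        =o[𝓝 (ξ₀, θ)]
        (fun q : ℝ × (Fin P → ℝ) => (q.1 - ξ₀) ^ 4 + ∑ j, (q.2 j - θ j) ^ 2))
    (δ₁ : ℝ) (δ₂ : Fin P → ℝ)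
    (ξn : ℕ → ℝ) (hξn : ∀ n, ξn n = ξ₀ + δ₁ * (n : ℝ) ^ (-(1 / 4 : ℝ)))
    (θn : ℕ → Fin P → ℝ)
    (hθn : ∀ n j, θn n j = θ j + δ₂ j * (n : ℝ) ^ (-(1 / 2 : ℝ)))
    (r : ℕ → 𝒳 → ℝ)
    (hr : ∀ n x, r n x = Real.sqrt (p (ξn n) (θn n) x) - Real.sqrt (p ξ₀ θ x)
          - ((ξn n - ξ₀) ^ 2 * vξ x + ∑ j, (θn n j - θ j) * vθ x j))
    :
    ∀ ε > (0 : ℝ),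
      (Tendsto (fun n : ℕ =>
        (Measure.pi fun _ : Fin n => μ.withDensity fun x => ENNReal.ofReal (p ξ₀ θ x))
          {ω | ε < |(Real.sqrt n)⁻¹ * ∑ i,
            (r n (ω i) / Real.sqrt (p ξ₀ θ (ω i))) * (vξ (ω i) / Real.sqrt (p ξ₀ θ (ω i)))|})
        atTop (𝓝 0)) ∧
      (∀ j : Fin P, Tendsto (fun n : ℕ =>
        (Measure.pi fun _ : Fin n => μ.withDensity fun x => ENNReal.ofReal (p ξ₀ θ x))
          {ω | ε < |(Real.sqrt n)⁻¹ * ∑ i,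
            (r n (ω i) / Real.sqrt (p ξ₀ θ (ω i))) * (vθ (ω i) j / Real.sqrt (p ξ₀ θ (ω i)))|})
        atTop (𝓝 0)) :=
  cross_terms_remainder_tendsto_zero_general μ p ξ₀ θ hnonneg hprob vξ vθ hvξ hvθ hDQM δ₁ δ₂ ξn hξn
    θn hθn r hr
end

section
/- Under the modified DQM condition, the deterministic inner-product expansion 2 ∫ f₀(x) r_n(x) dμ(x) = −(1/(4n)) tᵀ J t + o(1/n) holds as n → ∞, where t = (δ₁², δ₂ᵀ)ᵀ; equivalently, 2⟨f₀, r_n⟩_{L²(μ)} = −∫ (h_nᵀ v(x))² dμ(x) + o(‖h_n‖²). -/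
/-!
Write `f₀ = √p(·; ξ₀, θ)`, `g_n = √p(·; ξ_n, θ_n)`, `w = δ₁² v_ξ + δ₂ᵀ v_θ` and `c_n = n^{-1/2}`.
Along the local sequence `h_nᵀ v = c_n w`, so in `L²(μ)` we have `g_n = f₀ + c_n w + r_n` with
`‖r_n‖ = o(c_n)` by DQM. Since `f₀` and `g_n` are unit vectors,
`0 = ‖g_n‖² - ‖f₀‖² = 2 c_n ⟪f₀, w⟫ + 2 ⟪f₀, r_n⟫ + ‖c_n w + r_n‖²`.
Dividing by `c_n` and letting `n → ∞` gives `⟪f₀, w⟫ = 0`, and then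
`2 ⟪f₀, r_n⟫ + c_n² ‖w‖² = -2 c_n ⟪w, r_n⟫ - ‖r_n‖² = o(c_n²)` by Cauchy–Schwarz.
-/

open MeasureTheory Filter Topology Asymptotics
open scoped RealInnerProductSpace

section InnerProductSpace

variable {E ι : Type*} [NormedAddCommGroup E] [InnerProductSpace ℝ E] {l : Filter ι}
  {f₀ w : E} {r : ι → E} {c : ι → ℝ}

lemma Asymptotics.IsLittleO.inner_right (x : E) (hr : r =o[l] c) :
    (fun i => ⟪x, r i⟫) =o[l] c :=
  ((innerSL ℝ x).isBigO_comp r l).trans_isLittleO hr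

lemma two_mul_inner_add_norm_sq_eq_zero {v : E} (h : ‖f₀ + v‖ = ‖f₀‖) :
    2 * ⟪f₀, v⟫ + ‖v‖ ^ 2 = 0 := by
  have := congrArg (· ^ 2) h
  simp only [norm_add_sq_real] at this
  linarith

lemma inner_eq_zero_of_norm_add_smul_add_eq (hc : Tendsto c l (𝓝 0))
    (hc₀ : ∃ᶠ i in l, c i ≠ 0) (hr : r =o[l] c)
    (hnorm : ∀ᶠ i in l, ‖f₀ + (c i • w + r i)‖ = ‖f₀‖) : ⟪f₀, w⟫ = 0 := by
  set v : ι → E := fun i => c i • w + r i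
  have hv : v =O[l] c :=
    (isBigO_of_le' (c := ‖w‖) l fun i => by rw [norm_smul, mul_comm]).add hr.isBigO
  have hv_sq : (fun i => ‖v i‖ ^ 2) =o[l] c := by
    have hv₀ := tendsto_norm_zero.comp (hv.trans_tendsto hc)
    simpa only [Function.comp_def, mul_one, ← pow_two] using
      hv.norm_left.mul_isLittleO ((isLittleO_one_iff ℝ).2 hv₀)
  have hlin : (fun i => ⟪f₀, w⟫ * c i) =o[l] c := by
    refine ((((hr.inner_right f₀).const_mul_left 2).add hv_sq).neg_left.const_mul_left (1 / 2)).congr'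
      ?_ .rfl
    filter_upwards [hnorm] with i hi
    have := two_mul_inner_add_norm_sq_eq_zero hi
    simp only [v, inner_add_right, real_inner_smul_right] at this ⊢
    linarith
  by_contra ha
  exact isLittleO_irrefl hc₀ ((isLittleO_const_mul_left_iff ha).1 hlin)

theorem isLittleO_inner_remainder_expansion (hc : Tendsto c l (𝓝 0))
    (hc₀ : ∃ᶠ i in l, c i ≠ 0) (hr : r =o[l] c)
    (hnorm : ∀ᶠ i in l, ‖f₀ + (c i • w + r i)‖ = ‖f₀‖) :
    (fun i => 2 * ⟪f₀, r i⟫ + c i ^ 2 * ‖w‖ ^ 2) =o[l] (fun i => c i ^ 2) := by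
  have hf₀w := inner_eq_zero_of_norm_add_smul_add_eq hc hc₀ hr hnorm
  have hwr : (fun i => c i * ⟪w, r i⟫) =o[l] (fun i => c i ^ 2) := by
    simpa only [pow_two] using (isBigO_refl c l).mul_isLittleO (hr.inner_right w)
  refine ((hwr.const_mul_left 2).add (hr.norm_left.pow two_pos)).neg_left.congr' ?_ .rfl
  filter_upwards [hnorm] with i hi
  have := two_mul_inner_add_norm_sq_eq_zero hi
  simp only [norm_add_sq_real, norm_smul, inner_add_right, real_inner_smul_right,
    real_inner_smul_left, hf₀w, Real.norm_eq_abs, mul_pow, sq_abs] at this ⊢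
  linarith

end InnerProductSpace

namespace MeasureTheory.MemLp

variable {α : Type*} [MeasurableSpace α] {μ : Measure α} {f g : α → ℝ}

lemma inner_toLp_toLp (hf : MemLp f 2 μ) (hg : MemLp g 2 μ) :
    ⟪hf.toLp f, hg.toLp g⟫ = ∫ x, f x * g x ∂μ := by
  rw [L2.inner_def]
  refine integral_congr_ae ?_
  filter_upwards [hf.coeFn_toLp, hg.coeFn_toLp] with x hfx hgx
  rw [hfx, hgx, real_inner_eq_re_inner]
  simp [mul_comm]

lemma norm_toLp_sq (hf : MemLp f 2 μ) : ‖hf.toLp f‖ ^ 2 = ∫ x, f x ^ 2 ∂μ := by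
  rw [← real_inner_self_eq_norm_sq, inner_toLp_toLp]
  simp only [pow_two]

end MeasureTheory.MemLp

lemma MeasureTheory.Integrable.memLp_sqrt {α : Type*} [MeasurableSpace α] {μ : Measure α}
    {f : α → ℝ} (hf : Integrable f μ) (hf₀ : 0 ≤ᵐ[μ] f) :
    MemLp (fun x => √(f x)) 2 μ := by
  refine (memLp_two_iff_integrable_sq
    (Real.continuous_sqrt.comp_aestronglyMeasurable hf.aestronglyMeasurable)).2 ?_
  refine hf.congr ?_
  filter_upwards [hf₀] with x hx using (Real.sq_sqrt hx).symm

theorem isLittleO_integral_remainder_expansion {ι α : Type*} [MeasurableSpace α] {μ : Measure α}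
    {l : Filter ι} {f₀ w : α → ℝ} {g r : ι → α → ℝ} {c : ι → ℝ}
    (hf₀ : MemLp f₀ 2 μ) (hw : MemLp w 2 μ) (hg : ∀ i, MemLp (g i) 2 μ)
    (hnorm : ∀ i, ∫ x, g i x ^ 2 ∂μ = ∫ x, f₀ x ^ 2 ∂μ)
    (hr : ∀ i x, r i x = g i x - f₀ x - c i * w x)
    (hc : Tendsto c l (𝓝 0)) (hc₀ : ∃ᶠ i in l, c i ≠ 0)
    (hR : (fun i => ∫ x, r i x ^ 2 ∂μ) =o[l] fun i => c i ^ 2) :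
    (fun i => 2 * ∫ x, f₀ x * r i x ∂μ + c i ^ 2 * ∫ x, w x ^ 2 ∂μ) =o[l]
      fun i => c i ^ 2 := by
  have hrL : ∀ i, MemLp (r i) 2 μ := fun i => by
    rw [show r i = g i - f₀ - c i • w from funext (hr i)]
    exact ((hg i).sub hf₀).sub (hw.const_smul (c i))
  have hsum : ∀ i,
      hf₀.toLp f₀ + (c i • hw.toLp w + (hrL i).toLp (r i)) = (hg i).toLp (g i) := by
    intro i
    rw [← MemLp.toLp_const_smul, ← MemLp.toLp_add, ← MemLp.toLp_add]
    refine MemLp.toLp_congr _ _ (.of_forall fun x => ?_)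
    simp only [Pi.add_apply, Pi.smul_apply, smul_eq_mul, hr]
    ring
  have hnormL : ∀ i,
      ‖hf₀.toLp f₀ + (c i • hw.toLp w + (hrL i).toLp (r i))‖ = ‖hf₀.toLp f₀‖ := by
    intro i
    rw [hsum i, ← sq_eq_sq₀ (norm_nonneg _) (norm_nonneg _), MemLp.norm_toLp_sq,
      MemLp.norm_toLp_sq, hnorm]
  have hrL_o : (fun i => (hrL i).toLp (r i)) =o[l] c := by
    refine isLittleO_norm_left.1 (IsLittleO.of_pow (n := 2) ?_ two_ne_zero)
    simpa only [Pi.pow_def, MemLp.norm_toLp_sq] using hR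
  simpa only [MemLp.inner_toLp_toLp, MemLp.norm_toLp_sq] using
    isLittleO_inner_remainder_expansion hc hc₀ hrL_o (.of_forall hnormL)

lemma Real.rpow_neg_one_fourth_sq {x : ℝ} (hx : 0 ≤ x) :
    (x ^ (-(1 / 4 : ℝ))) ^ 2 = x ^ (-(1 / 2 : ℝ)) := by
  rw [← Real.rpow_mul_natCast hx]
  norm_num

lemma Real.rpow_neg_one_half_sq {x : ℝ} (hx : 0 ≤ x) : (x ^ (-(1 / 2 : ℝ))) ^ 2 = 1 / x := by
  rw [← Real.rpow_mul_natCast hx]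
  norm_num [Real.rpow_neg_one]

lemma tendsto_natCast_rpow_neg_atTop {a : ℝ} (ha : 0 < a) :
    Tendsto (fun n : ℕ => (n : ℝ) ^ (-a)) atTop (𝓝 0) :=
  (tendsto_rpow_neg_atTop ha).comp tendsto_natCast_atTop_atTop

lemma tendsto_add_mul_natCast_rpow_neg_atTop (x δ : ℝ) {a : ℝ} (ha : 0 < a) :
    Tendsto (fun n : ℕ => x + δ * (n : ℝ) ^ (-a)) atTop (𝓝 x) := by
  simpa using ((tendsto_natCast_rpow_neg_atTop ha).const_mul δ).const_add x

lemma frequently_natCast_rpow_ne_zero (a : ℝ) : ∃ᶠ n : ℕ in atTop, (n : ℝ) ^ a ≠ 0 :=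
  ((eventually_gt_atTop 0).mono fun _ hn => (Real.rpow_pos_of_pos (Nat.cast_pos.2 hn) a).ne')
    |>.frequently

lemma Asymptotics.IsLittleO.comp_local_sequence {ι κ : Type*} [Fintype κ] {l : Filter ι}
    {F : ℝ × (κ → ℝ) → ℝ} {ξ₀ a : ℝ} {θ b : κ → ℝ} {q : ι → ℝ × (κ → ℝ)} {c : ι → ℝ}
    (hF : F =o[𝓝 (ξ₀, θ)] fun q => (q.1 - ξ₀) ^ 4 + ∑ j, (q.2 j - θ j) ^ 2)
    (hq : Tendsto q l (𝓝 (ξ₀, θ))) (hq₁ : ∀ i, ((q i).1 - ξ₀) ^ 2 = a * c i)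
    (hq₂ : ∀ i j, (q i).2 j - θ j = b j * c i) :
    (F ∘ q) =o[l] fun i => c i ^ 2 := by
  refine (hF.comp_tendsto hq).trans_isBigO
    ((isBigO_const_mul_self (a ^ 2 + ∑ j, b j ^ 2) _ l).congr_left fun i => ?_)
  rw [Function.comp_apply, show ((q i).1 - ξ₀) ^ 4 = (((q i).1 - ξ₀) ^ 2) ^ 2 by ring, hq₁]
  simp only [hq₂, mul_pow, ← Finset.sum_mul]
  ring

theorem inner_product_remainder_expansion_general
    {𝒳 : Type*} [MeasurableSpace 𝒳] (μ : Measure 𝒳)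
    {P : ℕ} (p : ℝ → (Fin P → ℝ) → 𝒳 → ℝ)
    (ξ₀ : ℝ) (θ : Fin P → ℝ)
    (hnonneg : ∀ ξ' θ' x, 0 ≤ p ξ' θ' x)
    (hprob : ∀ ξ' θ', ∫ x, p ξ' θ' x ∂μ = 1)
    (vξ : 𝒳 → ℝ) (vθ : 𝒳 → Fin P → ℝ)
    (hvξ : MemLp vξ 2 μ) (hvθ : ∀ j, MemLp (fun x => vθ x j) 2 μ)
    (hDQM : (fun q : ℝ × (Fin P → ℝ) =>
        ∫ x, (Real.sqrt (p q.1 q.2 x) - Real.sqrt (p ξ₀ θ x)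
          - ((q.1 - ξ₀) ^ 2 * vξ x + ∑ j, (q.2 j - θ j) * vθ x j)) ^ 2 ∂μ)
        =o[𝓝 (ξ₀, θ)]
        (fun q : ℝ × (Fin P → ℝ) => (q.1 - ξ₀) ^ 4 + ∑ j, (q.2 j - θ j) ^ 2))
    (δ₁ : ℝ) (δ₂ : Fin P → ℝ)
    (ξn : ℕ → ℝ) (hξn : ∀ n, ξn n = ξ₀ + δ₁ * (n : ℝ) ^ (-(1 / 4 : ℝ)))
    (θn : ℕ → Fin P → ℝ)
    (hθn : ∀ n j, θn n j = θ j + δ₂ j * (n : ℝ) ^ (-(1 / 2 : ℝ)))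
    (r : ℕ → 𝒳 → ℝ)
    (hr : ∀ n x, r n x = Real.sqrt (p (ξn n) (θn n) x) - Real.sqrt (p ξ₀ θ x)
          - ((ξn n - ξ₀) ^ 2 * vξ x + ∑ j, (θn n j - θ j) * vθ x j))
    :
    (fun n : ℕ =>
        2 * ∫ x, Real.sqrt (p ξ₀ θ x) * r n x ∂μ
          + (1 / (4 * (n : ℝ))) * (4 * ∫ x, (δ₁ ^ 2 * vξ x + ∑ j, δ₂ j * vθ x j) ^ 2 ∂μ))
      =o[atTop] (fun n : ℕ => 1 / (n : ℝ)) := by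
  set c : ℕ → ℝ := fun n => (n : ℝ) ^ (-(1 / 2 : ℝ))
  set w : 𝒳 → ℝ := fun x => δ₁ ^ 2 * vξ x + ∑ j, δ₂ j * vθ x j
  have hξ : ∀ n, (ξn n - ξ₀) ^ 2 = δ₁ ^ 2 * c n := fun n => by
    rw [hξn, add_sub_cancel_left, mul_pow, Real.rpow_neg_one_fourth_sq n.cast_nonneg]
  have hθ : ∀ n j, θn n j - θ j = δ₂ j * c n := fun n j => by rw [hθn, add_sub_cancel_left]
  have hlocal : Tendsto (fun n => (ξn n, θn n)) atTop (𝓝 (ξ₀, θ)) := by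
    refine .prodMk_nhds ?_ (tendsto_pi_nhds.2 fun j => ?_)
    · simpa only [← funext hξn] using
        tendsto_add_mul_natCast_rpow_neg_atTop ξ₀ δ₁ (by norm_num : (0 : ℝ) < 1 / 4)
    · simpa only [← funext fun n => hθn n j] using
        tendsto_add_mul_natCast_rpow_neg_atTop (θ j) (δ₂ j) (by norm_num : (0 : ℝ) < 1 / 2)
  have hR : (fun n => ∫ x, r n x ^ 2 ∂μ) =o[atTop] fun n => c n ^ 2 :=
    (hDQM.comp_local_sequence hlocal hξ hθ).congr_left fun n => by
      simp only [Function.comp_apply, hr]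
  have hr' : ∀ n x, r n x = √(p (ξn n) (θn n) x) - √(p ξ₀ θ x) - c n * w x := fun n x => by
    simp only [hr, hξ, hθ, w, mul_add, Finset.mul_sum, mul_assoc, mul_left_comm _ (c n)]
  have hf : ∀ ξ' θ', MemLp (fun x => √(p ξ' θ' x)) 2 μ := fun ξ' θ' =>
    (integrable_of_integral_eq_one (hprob ξ' θ')).memLp_sqrt (.of_forall (hnonneg ξ' θ'))
  have hf_sq : ∀ ξ' θ', ∫ x, √(p ξ' θ' x) ^ 2 ∂μ = 1 := fun ξ' θ' => by
    simp only [Real.sq_sqrt (hnonneg ξ' θ' _), hprob]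
  have hw : MemLp w 2 μ :=
    (hvξ.const_mul _).add (memLp_finsetSum _ fun j _ => (hvθ j).const_mul (δ₂ j))
  have key := isLittleO_integral_remainder_expansion (hf ξ₀ θ) hw (fun n => hf (ξn n) (θn n))
    (fun n => by rw [hf_sq, hf_sq]) hr' (tendsto_natCast_rpow_neg_atTop (by norm_num))
    (frequently_natCast_rpow_ne_zero _) hR
  simp only [c, Real.rpow_neg_one_half_sq (Nat.cast_nonneg _)] at key
  convert key using 3 with n
  ring

/-- Under the modified DQM condition, the deterministic inner-product
expansion `2⟨f₀, r_n⟩ = −(1/(4n)) tᵀJt + o(1/n)` holds as `n → ∞`. -/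
theorem inner_product_remainder_expansion
    {𝒳 : Type*} [MeasurableSpace 𝒳] (μ : Measure 𝒳) [SigmaFinite μ]
    {P : ℕ} (p : ℝ → (Fin P → ℝ) → 𝒳 → ℝ)
    (ξ₀ : ℝ) (θ : Fin P → ℝ)
    (hmeas : ∀ ξ' θ', Measurable (p ξ' θ'))
    (hnonneg : ∀ ξ' θ' x, 0 ≤ p ξ' θ' x)
    (hprob : ∀ ξ' θ', ∫ x, p ξ' θ' x ∂μ = 1)
    (vξ : 𝒳 → ℝ) (vθ : 𝒳 → Fin P → ℝ)
    (hvξmeas : Measurable vξ) (hvθmeas : ∀ j, Measurable fun x => vθ x j)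
    (hvξ : MemLp vξ 2 μ) (hvθ : ∀ j, MemLp (fun x => vθ x j) 2 μ)
    (hDQM : (fun q : ℝ × (Fin P → ℝ) =>
        ∫ x, (Real.sqrt (p q.1 q.2 x) - Real.sqrt (p ξ₀ θ x)
          - ((q.1 - ξ₀) ^ 2 * vξ x + ∑ j, (q.2 j - θ j) * vθ x j)) ^ 2 ∂μ)
        =o[𝓝 (ξ₀, θ)]
        (fun q : ℝ × (Fin P → ℝ) => (q.1 - ξ₀) ^ 4 + ∑ j, (q.2 j - θ j) ^ 2))
    (δ₁ : ℝ) (δ₂ : Fin P → ℝ)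
    (ξn : ℕ → ℝ) (hξn : ∀ n, ξn n = ξ₀ + δ₁ * (n : ℝ) ^ (-(1 / 4 : ℝ)))
    (θn : ℕ → Fin P → ℝ)
    (hθn : ∀ n j, θn n j = θ j + δ₂ j * (n : ℝ) ^ (-(1 / 2 : ℝ)))
    (r : ℕ → 𝒳 → ℝ)
    (hr : ∀ n x, r n x = Real.sqrt (p (ξn n) (θn n) x) - Real.sqrt (p ξ₀ θ x)
          - ((ξn n - ξ₀) ^ 2 * vξ x + ∑ j, (θn n j - θ j) * vθ x j))
    :
    (fun n : ℕ =>
        2 * ∫ x, Real.sqrt (p ξ₀ θ x) * r n x ∂μ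
          + (1 / (4 * (n : ℝ))) * (4 * ∫ x, (δ₁ ^ 2 * vξ x + ∑ j, δ₂ j * vθ x j) ^ 2 ∂μ))
      =o[atTop] (fun n : ℕ => 1 / (n : ℝ)) :=
  inner_product_remainder_expansion_general μ p ξ₀ θ hnonneg hprob vξ vθ hvξ hvθ hDQM δ₁ δ₂ ξn hξn
    θn hθn r hr
end

section
/- Let 0 < ρ < 1 and let C = { (η₁, η₂) ∈ ℝ² : η₂ ≥ 0 and η₁ ≥ (ρ/√(1−ρ²)) η₂ } be the closed convex cone appearing in the two-dimensional C(α) test. For any point w = (w₁, w₂) with w₂ ≥ 0 and −(√(1−ρ²)/ρ) w₂ ≤ w₁ ≤ (ρ/√(1−ρ²)) w₂, the Euclidean projection of w onto C equals u = ( ρ² w₁ + ρ√(1−ρ²) w₂ , ρ√(1−ρ²) w₁ + (1−ρ²) w₂ ), and the squared Euclidean norm of this projection is ‖u‖² = ( ρ w₁ + √(1−ρ²) w₂ )². -/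
open scoped BigOperators

/-- For `0 < ρ < 1` and the closed convex cone
`C = {(η₁, η₂) : η₂ ≥ 0, η₁ ≥ (ρ/√(1−ρ²)) η₂}`, any point `w = (w₁, w₂)` with `w₂ ≥ 0` and
`−(√(1−ρ²)/ρ) w₂ ≤ w₁ ≤ (ρ/√(1−ρ²)) w₂` has Euclidean projection onto `C` equal to
`u = (ρ² w₁ + ρ√(1−ρ²) w₂, ρ√(1−ρ²) w₁ + (1−ρ²) w₂)`, whose squared norm is
`(ρ w₁ + √(1−ρ²) w₂)²`. -/
theorem projection_onto_cone
    (ρ : ℝ) (hρ0 : 0 < ρ) (hρ1 : ρ < 1)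
    (C : Set (ℝ × ℝ))
    (hC : C = {η : ℝ × ℝ | 0 ≤ η.2 ∧ ρ / Real.sqrt (1 - ρ ^ 2) * η.2 ≤ η.1})
    (w₁ w₂ : ℝ) (hw₂ : 0 ≤ w₂)
    (hw₁l : -(Real.sqrt (1 - ρ ^ 2) / ρ) * w₂ ≤ w₁)
    (hw₁u : w₁ ≤ ρ / Real.sqrt (1 - ρ ^ 2) * w₂)
    (u₁ u₂ : ℝ)
    (hu₁ : u₁ = ρ ^ 2 * w₁ + ρ * Real.sqrt (1 - ρ ^ 2) * w₂)
    (hu₂ : u₂ = ρ * Real.sqrt (1 - ρ ^ 2) * w₁ + (1 - ρ ^ 2) * w₂) :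
    (u₁, u₂) ∈ C ∧
    (∀ y ∈ C, (w₁ - u₁) ^ 2 + (w₂ - u₂) ^ 2 ≤ (w₁ - y.1) ^ 2 + (w₂ - y.2) ^ 2) ∧
    u₁ ^ 2 + u₂ ^ 2 = (ρ * w₁ + Real.sqrt (1 - ρ ^ 2) * w₂) ^ 2 := by
  set s := Real.sqrt (1 - ρ ^ 2) with hs
  have h1 : (0:ℝ) < 1 - ρ ^ 2 := by nlinarith
  have hs0 : 0 < s := Real.sqrt_pos.mpr h1
  have hs2 : s ^ 2 = 1 - ρ ^ 2 := Real.sq_sqrt h1.le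
  -- ρ w₁ + s w₂ ≥ 0
  have hpos : 0 ≤ ρ * w₁ + s * w₂ := by
    have key : ρ * (-(s / ρ) * w₂) = -(s * w₂) := by field_simp
    nlinarith [mul_le_mul_of_nonneg_left hw₁l hρ0.le]
  -- s w₁ - ρ w₂ ≤ 0
  have hneg : s * w₁ - ρ * w₂ ≤ 0 := by
    have := mul_le_mul_of_nonneg_left hw₁u hs0.le
    have hsd : s * (ρ / s * w₂) = ρ * w₂ := by field_simp
    nlinarith
  refine ⟨?_, ?_, ?_⟩
  · rw [hC]
    constructor
    · simp only [hu₂]; nlinarith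
    · simp only [hu₁, hu₂]
      rw [div_mul_eq_mul_div, div_le_iff₀ hs0]
      have e : (ρ ^ 2 * w₁ + ρ * s * w₂) * s = ρ * (ρ * s * w₁ + (1 - ρ ^ 2) * w₂) := by
        linear_combination (ρ * w₂) * hs2
      linarith
  · intro y hy
    rw [hC] at hy
    obtain ⟨hy2, hy1⟩ := hy
    have hy1' : ρ * y.2 ≤ s * y.1 := by
      rw [div_mul_eq_mul_div, div_le_iff₀ hs0] at hy1
      nlinarith
    subst hu₁ hu₂
    have key : (w₁ - y.1) ^ 2 + (w₂ - y.2) ^ 2 -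
        ((w₁ - (ρ ^ 2 * w₁ + ρ * s * w₂)) ^ 2 + (w₂ - (ρ * s * w₁ + (1 - ρ ^ 2) * w₂)) ^ 2) =
        (y.1 - (ρ ^ 2 * w₁ + ρ * s * w₂)) ^ 2 + (y.2 - (ρ * s * w₁ + (1 - ρ ^ 2) * w₂)) ^ 2 +
        2 * (ρ * w₂ - s * w₁) * (s * y.1 - ρ * y.2) := by
      linear_combination (2 * (w₁ * y.1 - ρ ^ 2 * (w₁ ^ 2 + w₂ ^ 2))) * hs2
    have h1' : 0 ≤ 2 * (ρ * w₂ - s * w₁) * (s * y.1 - ρ * y.2) := by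
      have := mul_nonneg (by linarith : (0:ℝ) ≤ ρ * w₂ - s * w₁)
        (by linarith : (0:ℝ) ≤ s * y.1 - ρ * y.2)
      linarith
    nlinarith [sq_nonneg (y.1 - (ρ ^ 2 * w₁ + ρ * s * w₂)),
      sq_nonneg (y.2 - (ρ * s * w₁ + (1 - ρ ^ 2) * w₂))]
  · subst hu₁ hu₂
    linear_combination (ρ ^ 2 * w₁ ^ 2 - (1 - ρ ^ 2) * w₂ ^ 2) * hs2
end

section
/- Let U be a real random variable with distribution F satisfying E[U] = 0 and E[U²] = 1, let τ > 0, and let λ ↦ p(x; λ) be a probability density in x that is twice continuously differentiable in λ with derivatives dominated (uniformly for λ near λ₀ and u in the support of F) by an F-integrable function, so that differentiation under the integral sign is justified. Define q(x; ξ) = ∫ p(x; λ₀ + τ ξ u) dF(u) and suppose p(x; λ₀) > 0. Then the first-order score for ξ vanishes identically: ∂/∂ξ log q(x; ξ) |_{ξ=0} = τ ∫ u dF(u) · p′(x; λ₀)/p(x; λ₀) = 0 for all such x, while the second-order score equals ∂²/∂ξ² log q(x; ξ) |_{ξ=0} = τ² p″(x; λ₀)/p(x; λ₀), where p′ and p″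 denote the first and second partial derivatives of p with respect to λ. -/
/-!
Write `q(ξ) = ∫ p(x; l₀ + τξu) dF(u)`. Differentiating under the integral sign, each
`ξ`-derivative of `u ↦ u ^ k p⁽ᵏ⁾(l₀ + τξu)` produces a factor `τu`, so
`q'(ξ) = τ ∫ u p'(l₀ + τξu) dF(u)` and `q''(0) = τ² p''(l₀) ∫ u² dF = τ² p''(l₀)`, while
`q'(0) = τ p'(l₀) ∫ u dF = 0`. Hence `(log q)'(0) = q'(0)/q(0) = 0` and
`(log q)''(0) = (q''(0) q(0) - q'(0)²)/q(0)² = τ² p''(l₀)/p(l₀)`.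
-/

open MeasureTheory Filter Topology

lemma hasDerivAt_integral_pow_mul_iteratedDeriv_affine {F : Measure ℝ} {f : ℝ → ℝ}
    {n : WithTop ℕ∞} (hf : ContDiff ℝ n f) {k : ℕ} (hk : k < n) (l₀ τ : ℝ) {ξ₀ : ℝ}
    {s : Set ℝ} (hs : s ∈ 𝓝 ξ₀) {D : ℝ → ℝ} (hD : Integrable D F)
    (hbound₀ : ∀ᵐ u ∂F, |u ^ k * iteratedDeriv k f (l₀ + τ * ξ₀ * u)| ≤ D u)
    (hbound₁ : ∀ᵐ u ∂F, ∀ ξ ∈ s,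
      |u ^ (k + 1) * iteratedDeriv (k + 1) f (l₀ + τ * ξ * u)| ≤ D u) :
    HasDerivAt (fun ξ => ∫ u, u ^ k * iteratedDeriv k f (l₀ + τ * ξ * u) ∂F)
      (τ * ∫ u, u ^ (k + 1) * iteratedDeriv (k + 1) f (l₀ + τ * ξ₀ * u) ∂F) ξ₀ := by
  have hdiff : Differentiable ℝ (iteratedDeriv k f) := hf.differentiable_iteratedDeriv k hk
  have hcont₀ : Continuous (iteratedDeriv k f) := hdiff.continuous
  have hcont : Continuous (iteratedDeriv (k + 1) f) :=
    hf.continuous_iteratedDeriv (k + 1) (ENat.add_one_natCast_le_withTop_of_lt hk)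
  have hchain : ∀ u ξ, HasDerivAt (fun ξ => u ^ k * iteratedDeriv k f (l₀ + τ * ξ * u))
      (τ * (u ^ (k + 1) * iteratedDeriv (k + 1) f (l₀ + τ * ξ * u))) ξ := by
    intro u ξ
    have hinner : HasDerivAt (fun ξ => l₀ + τ * ξ * u) (τ * u) ξ := by
      simpa using (((hasDerivAt_id ξ).const_mul τ).mul_const u).const_add l₀
    rw [iteratedDeriv_succ]
    exact (((hdiff _).hasDerivAt.comp ξ hinner).const_mul (u ^ k)).congr_deriv (by ring)
  rw [← integral_const_mul]
  refine (hasDerivAt_integral_of_dominated_loc_of_deriv_le hs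
    (.of_forall fun ξ => ?_) ?_ ?_ (bound := fun u => |τ| * D u) ?_ (hD.const_mul |τ|)
    (.of_forall fun u ξ _ => hchain u ξ)).2
  · exact (by fun_prop : Continuous _).aestronglyMeasurable
  · refine hD.mono' (by fun_prop : Continuous _).aestronglyMeasurable ?_
    simpa only [Real.norm_eq_abs] using hbound₀
  · exact (by fun_prop : Continuous _).aestronglyMeasurable
  · filter_upwards [hbound₁] with u hu ξ hξ
    rw [Real.norm_eq_abs, abs_mul]
    exact mul_le_mul_of_nonneg_left (hu ξ hξ) (abs_nonneg τ)

lemma integral_pow_mul_affine_zero (F : Measure ℝ) (φ : ℝ → ℝ) (k : ℕ) (l₀ τ : ℝ) :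
    ∫ u, u ^ k * φ (l₀ + τ * 0 * u) ∂F = (∫ u, u ^ k ∂F) * φ l₀ := by
  simp only [mul_zero, zero_mul, add_zero, integral_mul_const]

lemma deriv_deriv_log_eq {g g' : ℝ → ℝ} {a g'' : ℝ}
    (hg : ∀ᶠ ξ in 𝓝 a, HasDerivAt g (g' ξ) ξ) (hg' : HasDerivAt g' g'' a) (ha : g a ≠ 0) :
    deriv (deriv fun ξ => Real.log (g ξ)) a = (g'' * g a - g' a ^ 2) / g a ^ 2 := by
  have hne : ∀ᶠ ξ in 𝓝 a, g ξ ≠ 0 :=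
    hg.self_of_nhds.continuousAt.eventually_ne ha
  have hlog : (deriv fun ξ => Real.log (g ξ)) =ᶠ[𝓝 a] fun ξ => g' ξ / g ξ := by
    filter_upwards [hg, hne] with ξ hξ hξne
    exact (hξ.log hξne).deriv
  rw [hlog.deriv_eq, (hg'.fun_div hg.self_of_nhds ha).deriv]
  ring

theorem heterogeneity_score_degenerate_general
    {𝒳 : Type*}
    (F : Measure ℝ) [IsProbabilityMeasure F]
    (hU1 : ∫ u, u ∂F = 0) (hU2 : ∫ u, u ^ 2 ∂F = 1)
    (τ : ℝ) (l₀ : ℝ)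
    (p : 𝒳 → ℝ → ℝ)
    (x : 𝒳)
    (hsmooth : ContDiff ℝ 2 fun l => p x l)
    -- domination justifying differentiation under the integral sign
    (D : ℝ → ℝ) (hD : Integrable D F) (ε : ℝ) (hε : 0 < ε)
    (hdom : ∀ᵐ u ∂F, ∀ ξ : ℝ, |ξ| < ε → ∀ k ≤ 2,
      |u ^ k * iteratedDeriv k (fun l => p x l) (l₀ + τ * ξ * u)| ≤ D u)
    (hpos : 0 < p x l₀) :
    HasDerivAt (fun ξ : ℝ => Real.log (∫ u, p x (l₀ + τ * ξ * u) ∂F)) 0 0 ∧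
    deriv (deriv fun ξ : ℝ => Real.log (∫ u, p x (l₀ + τ * ξ * u) ∂F)) 0
      = τ ^ 2 * iteratedDeriv 2 (fun l => p x l) l₀ / p x l₀ := by
  set f : ℝ → ℝ := fun l => p x l
  have hopen : IsOpen {ξ : ℝ | |ξ| < ε} := isOpen_lt continuous_abs continuous_const
  have hzero : (0 : ℝ) ∈ {ξ : ℝ | |ξ| < ε} := by simpa using hε
  have hderiv (k : ℕ) (hk : k < 2) : ∀ ξ ∈ {ξ : ℝ | |ξ| < ε},
      HasDerivAt (fun ξ => ∫ u, u ^ k * iteratedDeriv k f (l₀ + τ * ξ * u) ∂F)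
        (τ * ∫ u, u ^ (k + 1) * iteratedDeriv (k + 1) f (l₀ + τ * ξ * u) ∂F) ξ := fun ξ hξ =>
    hasDerivAt_integral_pow_mul_iteratedDeriv_affine hsmooth (mod_cast hk) l₀ τ
      (hopen.mem_nhds hξ) hD (hdom.mono fun u hu => hu ξ hξ k hk.le)
      (hdom.mono fun u hu ξ hξ => hu ξ hξ (k + 1) hk)
  have hq (ξ : ℝ) : ∫ u, p x (l₀ + τ * ξ * u) ∂F
      = ∫ u, u ^ 0 * iteratedDeriv 0 f (l₀ + τ * ξ * u) ∂F := by
    simp only [pow_zero, one_mul, iteratedDeriv_zero, f]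
  have hq₀ : ∫ u, u ^ 0 * iteratedDeriv 0 f (l₀ + τ * 0 * u) ∂F = p x l₀ := by
    simp [f]
  have hq₁ : τ * ∫ u, u ^ 1 * iteratedDeriv 1 f (l₀ + τ * 0 * u) ∂F = 0 := by
    rw [integral_pow_mul_affine_zero]
    simp only [pow_one, hU1, zero_mul, mul_zero]
  have hq₂ : ∫ u, u ^ 2 * iteratedDeriv 2 f (l₀ + τ * 0 * u) ∂F = iteratedDeriv 2 f l₀ := by
    rw [integral_pow_mul_affine_zero, hU2, one_mul]
  have hq₀_ne : ∫ u, u ^ 0 * iteratedDeriv 0 f (l₀ + τ * 0 * u) ∂F ≠ 0 := hq₀ ▸ hpos.ne'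
  simp only [hq]
  constructor
  · exact ((hderiv 0 two_pos 0 hzero).log hq₀_ne).congr_deriv
      (by rw [hq₁, zero_div])
  · rw [deriv_deriv_log_eq (eventually_of_mem (hopen.mem_nhds hzero) (hderiv 0 two_pos))
      ((hderiv 1 one_lt_two 0 hzero).const_mul τ) hq₀_ne, hq₁, hq₂, hq₀]
    field_simp
    ring

/-- For the mixture density `q(x; ξ) = ∫ p(x; l₀ + τξu) dF(u)` with
`E[U] = 0`, `E[U²] = 1`, the first-order score in `ξ` vanishes identically at `ξ = 0`,
while the second-order score equals `τ² p″(x; l₀)/p(x; l₀)`. -/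
theorem heterogeneity_score_degenerate
    {𝒳 : Type*} [MeasurableSpace 𝒳] (μ : Measure 𝒳)
    (F : Measure ℝ) [IsProbabilityMeasure F]
    (hU1 : ∫ u, u ∂F = 0) (hU2 : ∫ u, u ^ 2 ∂F = 1)
    (τ : ℝ) (hτ : 0 < τ) (l₀ : ℝ)
    (p : 𝒳 → ℝ → ℝ)
    (hpnonneg : ∀ x l, 0 ≤ p x l)
    (hpdens : ∀ l, ∫ x, p x l ∂μ = 1)
    (x : 𝒳)
    (hsmooth : ContDiff ℝ 2 fun l => p x l)
    -- domination justifying differentiation under the integral sign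
    (D : ℝ → ℝ) (hD : Integrable D F) (ε : ℝ) (hε : 0 < ε)
    (hdom : ∀ᵐ u ∂F, ∀ ξ : ℝ, |ξ| < ε → ∀ k ≤ 2,
      |u ^ k * iteratedDeriv k (fun l => p x l) (l₀ + τ * ξ * u)| ≤ D u)
    (hpos : 0 < p x l₀) :
    HasDerivAt (fun ξ : ℝ => Real.log (∫ u, p x (l₀ + τ * ξ * u) ∂F)) 0 0 ∧
    deriv (deriv fun ξ : ℝ => Real.log (∫ u, p x (l₀ + τ * ξ * u) ∂F)) 0
      = τ ^ 2 * iteratedDeriv 2 (fun l => p x l) l₀ / p x l₀ :=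
  heterogeneity_score_degenerate_general F hU1 hU2 τ l₀ p x hsmooth D hD ε hε hdom hpos
end

section
/- Let U be a real random variable with distribution F satisfying E[U] = 0 and E[U²] = 1, let τ > 0, and let λ ↦ p(y; λ) be twice continuously differentiable in λ with derivatives dominated near λ₀ by an F-integrable function so that differentiation under the integral sign is justified, and suppose p(y; λ₀) > 0. Define l(η) = log ∫ p(y; λ₀ + τ √η · u) dF(u) for η ≥ 0. Then the right derivative of l at η = 0 exists and equals ∇_η l |_{η=0} = (τ²/2) E[U²] · ∇²_λ p(y; λ₀) / p(y; λ₀). -/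
/-!
Write `G(s) = ∫ p(l₀ + τ s u) dF(u)`, so that the mixture density is `G(√η)`.
Differentiating under the integral sign, `G'(0) = τ p'(l₀) E[U] = 0` and
`G''(0) = τ² E[U²] p''(l₀)`, so by l'Hôpital `(G(s) - G(0)) / s² → G''(0) / 2` as `s → 0⁺`.
Substituting `s = √η` turns this difference quotient into the slope of `η ↦ G(√η)` at `0`,
and the chain rule through `log` divides by `G(0) = p(l₀)`.
-/

open MeasureTheory Filter Topology

theorem Real.tendsto_sqrt_nhdsGT_zero : Tendsto Real.sqrt (𝓝[>] 0) (𝓝[>] 0) := by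
  refine tendsto_nhdsWithin_of_tendsto_nhds_of_eventually_within _ ?_ ?_
  · simpa using Real.continuous_sqrt.continuousWithinAt.tendsto (s := Set.Ioi 0) (x := 0)
  · filter_upwards [self_mem_nhdsWithin] with η hη using Real.sqrt_pos.mpr hη

theorem hasDerivWithinAt_comp_sqrt_of_tendsto_div_sq {G : ℝ → ℝ} {L : ℝ}
    (hG : Tendsto (fun s => (G s - G 0) / s ^ 2) (𝓝[>] 0) (𝓝 L)) :
    HasDerivWithinAt (fun η => G (Real.sqrt η)) L (Set.Ici 0) 0 := by
  rw [hasDerivWithinAt_iff_tendsto_slope, Set.Ici_sdiff_left]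
  refine (hG.comp Real.tendsto_sqrt_nhdsGT_zero).congr' ?_
  filter_upwards [self_mem_nhdsWithin] with η (hη : 0 < η)
  simp [slope_def_field, Real.sq_sqrt hη.le]

theorem tendsto_sub_div_sq_of_hasDerivWithinAt {G G' : ℝ → ℝ} {ε c : ℝ} (hε : 0 < ε)
    (hG : ∀ s ∈ Set.Ico 0 ε, HasDerivAt G (G' s) s) (hG'0 : G' 0 = 0)
    (hG' : HasDerivWithinAt G' c (Set.Ici 0) 0) :
    Tendsto (fun s => (G s - G 0) / s ^ 2) (𝓝[>] 0) (𝓝 (c / 2)) := by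
  have hslope : Tendsto (fun s => G' s / s) (𝓝[>] 0) (𝓝 c) := by
    rw [hasDerivWithinAt_iff_tendsto_slope, Set.Ici_sdiff_left] at hG'
    exact hG'.congr fun s => by simp [slope_def_field, hG'0]
  refine HasDerivAt.lhopital_zero_right_on_Ioo hε (f' := G') (g' := fun s => 2 * s)
    (fun s hs => (hG s (Set.Ioo_subset_Ico_self hs)).sub_const (G 0))
    (fun s _ => by simpa using hasDerivAt_pow 2 s)
    (fun s hs => (mul_pos two_pos hs.1).ne') ?_ ?_ ?_
  · simpa using ((hG 0 ⟨le_rfl, hε⟩).continuousAt.tendsto.sub_const (G 0)).mono_left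
      nhdsWithin_le_nhds
  · simpa using ((continuous_pow 2).tendsto (0 : ℝ)).mono_left nhdsWithin_le_nhds
  · exact (hslope.div_const 2).congr fun s => by ring

theorem hasDerivAt_integral_pow_mul_comp_affine {F : Measure ℝ} {φ : ℝ → ℝ}
    (hφ : Differentiable ℝ φ) (k : ℕ) {a τ ε s₀ : ℝ} {D : ℝ → ℝ} (hD : Integrable D F)
    (hbound₀ : ∀ᵐ u ∂F, |u ^ k * φ (a + τ * s₀ * u)| ≤ D u)
    (hbound₁ : ∀ᵐ u ∂F, ∀ ξ, |ξ| < ε → |u ^ (k + 1) * deriv φ (a + τ * ξ * u)| ≤ D u)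
    (hs₀ : |s₀| < ε) :
    HasDerivAt (fun s => ∫ u, (τ * u) ^ k * φ (a + τ * s * u) ∂F)
      (∫ u, (τ * u) ^ (k + 1) * deriv φ (a + τ * s₀ * u) ∂F) s₀ := by
  have hmeas (s : ℝ) : AEStronglyMeasurable (fun u => (τ * u) ^ k * φ (a + τ * s * u)) F := by
    have := hφ.continuous
    exact (by fun_prop : Continuous fun u => (τ * u) ^ k * φ (a + τ * s * u)).aestronglyMeasurable
  have hball : ∀ ξ ∈ Metric.ball s₀ (ε - |s₀|), |ξ| < ε := fun ξ hξ => by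
    have := abs_sub_abs_le_abs_sub ξ s₀
    rw [Metric.mem_ball, Real.dist_eq] at hξ
    linarith
  refine (hasDerivAt_integral_of_dominated_loc_of_deriv_le
    (bound := fun u => |τ| ^ (k + 1) * D u)
    (F' := fun s u => (τ * u) ^ (k + 1) * deriv φ (a + τ * s * u))
    (Metric.ball_mem_nhds s₀ (sub_pos.mpr hs₀)) (Eventually.of_forall hmeas) ?_
    ?_ ?_ (hD.const_mul _) ?_).2
  · refine (hD.const_mul (|τ| ^ k)).mono' (hmeas s₀) ?_
    filter_upwards [hbound₀] with u hu
    rw [Real.norm_eq_abs, mul_pow, mul_assoc, abs_mul, abs_pow]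
    exact mul_le_mul_of_nonneg_left hu (by positivity)
  · exact (by fun_prop : Measurable fun u => (τ * u) ^ (k + 1)).aestronglyMeasurable.mul
      ((measurable_deriv φ).comp (by fun_prop)).aestronglyMeasurable
  · filter_upwards [hbound₁] with u hu ξ hξ
    rw [Real.norm_eq_abs, mul_pow, mul_assoc, abs_mul, abs_pow]
    exact mul_le_mul_of_nonneg_left (hu ξ (hball ξ hξ)) (by positivity)
  · refine Eventually.of_forall fun u ξ _ => ?_
    have hinner : HasDerivAt (fun s => a + τ * s * u) (τ * u) ξ := by
      simpa using (((hasDerivAt_id ξ).const_mul τ).mul_const u).const_add a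
    exact (((hφ _).hasDerivAt.comp ξ hinner).const_mul ((τ * u) ^ k)).congr_deriv (by ring)

theorem reparameterized_first_right_derivative_general
    (F : Measure ℝ) [IsProbabilityMeasure F]
    (hU1 : ∫ u, u ∂F = 0)
    (τ : ℝ) (l₀ : ℝ)
    (p : ℝ → ℝ)
    (hsmooth : ContDiff ℝ 2 p)
    -- domination justifying differentiation under the integral sign
    (D : ℝ → ℝ) (hD : Integrable D F) (ε : ℝ) (hε : 0 < ε)
    (hdom : ∀ᵐ u ∂F, ∀ ξ : ℝ, |ξ| < ε → ∀ k ≤ 2,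
      |u ^ k * iteratedDeriv k p (l₀ + τ * ξ * u)| ≤ D u)
    (hpos : 0 < p l₀) :
    HasDerivWithinAt
      (fun η : ℝ => Real.log (∫ u, p (l₀ + τ * Real.sqrt η * u) ∂F))
      ((τ ^ 2 / 2) * (∫ u, u ^ 2 ∂F) * (iteratedDeriv 2 p l₀ / p l₀))
      (Set.Ici 0) 0 := by
  set G : ℕ → ℝ → ℝ := fun k s => ∫ u, (τ * u) ^ k * iteratedDeriv k p (l₀ + τ * s * u) ∂F
  have hG : ∀ k ≤ 1, ∀ s, |s| < ε → HasDerivAt (G k) (G (k + 1) s) s := fun k hk s hs => by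
    simp only [G, iteratedDeriv_succ]
    exact hasDerivAt_integral_pow_mul_comp_affine
      (hsmooth.differentiable_iteratedDeriv k (by norm_cast; omega)) k hD
      (hdom.mono fun u hu => hu s hs k (by omega))
      (hdom.mono fun u hu ξ hξ => by simpa [iteratedDeriv_succ] using hu ξ hξ (k + 1) (by omega))
      hs
  have hG₁ : G 1 0 = 0 := by simp [G, mul_comm τ, mul_assoc, integral_mul_const, hU1]
  have hG₂ : G 2 0 = τ ^ 2 * (∫ u, u ^ 2 ∂F) * iteratedDeriv 2 p l₀ := by
    simp [G, mul_pow, integral_const_mul, integral_mul_const]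
  have hsqrt := hasDerivWithinAt_comp_sqrt_of_tendsto_div_sq <|
    tendsto_sub_div_sq_of_hasDerivWithinAt hε
      (fun s hs => hG 0 (by norm_num) s (by rw [abs_of_nonneg hs.1]; exact hs.2)) hG₁
      (hG 1 le_rfl 0 (by simpa using hε)).hasDerivWithinAt
  have hG₀ : G 0 √0 = p l₀ := by simp [G]
  have hlog := (Real.hasDerivAt_log (hG₀ ▸ hpos.ne')).comp_hasDerivWithinAt (0 : ℝ) hsqrt
  have hfun :
      (fun η => Real.log (∫ u, p (l₀ + τ * √η * u) ∂F)) = Real.log ∘ fun η => G 0 √η := by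
    ext; simp [G]
  rw [hfun]
  refine hlog.congr_deriv ?_
  rw [hG₀, show 1 + 1 = 2 from rfl, hG₂]
  field_simp

/-- For the reparameterized mixture log-density
`l(η) = log ∫ p(y; l₀ + τ√η u) dF(u)`, `η ≥ 0`, with `E[U] = 0` and `E[U²] = 1`, the right
derivative of `l` at `η = 0` exists and equals `(τ²/2) E[U²] ∇²_λ p(y; l₀)/p(y; l₀)`. -/
theorem reparameterized_first_right_derivative
    (F : Measure ℝ) [IsProbabilityMeasure F]
    (hU1 : ∫ u, u ∂F = 0) (hU2 : ∫ u, u ^ 2 ∂F = 1)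
    (τ : ℝ) (hτ : 0 < τ) (l₀ : ℝ)
    (p : ℝ → ℝ)
    (hsmooth : ContDiff ℝ 2 p)
    -- domination justifying differentiation under the integral sign
    (D : ℝ → ℝ) (hD : Integrable D F) (ε : ℝ) (hε : 0 < ε)
    (hdom : ∀ᵐ u ∂F, ∀ ξ : ℝ, |ξ| < ε → ∀ k ≤ 2,
      |u ^ k * iteratedDeriv k p (l₀ + τ * ξ * u)| ≤ D u)
    (hpos : 0 < p l₀) :
    HasDerivWithinAt
      (fun η : ℝ => Real.log (∫ u, p (l₀ + τ * Real.sqrt η * u) ∂F))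
      ((τ ^ 2 / 2) * (∫ u, u ^ 2 ∂F) * (iteratedDeriv 2 p l₀ / p l₀))
      (Set.Ici 0) 0 :=
  reparameterized_first_right_derivative_general F hU1 τ l₀ p hsmooth D hD ε hε hdom hpos
end

section
/- Let W = (W₁, …, W_q) be a q-dimensional Gaussian random vector with mean zero and diagonal nonsingular covariance matrix Σ_q = diag(σ₁², …, σ_q²), and define T = (0 ∨ W)ᵀ Σ_q^{-1} (0 ∨ W) = Σ_{i=1}^q (max(0, W_i))² / σ_i². Then T is distributed as the chi-square mixture Σ_{i=0}^q binom(q, i) 2^{-q} χ²_i; that is, for every c ≥ 0, P(T ≤ c) = Σ_{i=0}^q binom(q, i) 2^{-q} P(χ²_i ≤ c), where χ²₀ denotes the point mass at 0 and χ²_i the chi-square distribution with i degrees of freedom. -/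
open MeasureTheory ProbabilityTheory
open scoped BigOperators ENNReal NNReal

/-- The chi-square distribution with `k` degrees of freedom, realized as the law of the
squared Euclidean norm of a standard Gaussian vector in `ℝ^k`.  For `k = 0` this is the
point mass at `0`. -/
noncomputable def chiSqMeasure (k : ℕ) : Measure ℝ :=
  (Measure.pi fun _ : Fin k => gaussianReal 0 1).map fun y => ∑ j, (y j) ^ 2

/-! Rescaling the `i`-th coordinate by `√vᵢ` reduces the claim to a standard Gaussian vector `Z`.
Splitting off one coordinate, `max 0 Z₀ ^ 2` vanishes with probability `1/2` and, by the symmetry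
of `Z₀`, is otherwise distributed as `Z₀ ^ 2`, so the distribution function `F_q = chiBarSqCDF q`
of `∑ max 0 Zᵢ ^ 2` satisfies `F_{q+1} = F_q / 2 + (F_q ∗ χ²₁) / 2`, while `χ²_{k+1} = χ²_k ∗ χ²₁`.
Pascal's rule then propagates the binomial mixture from `q` to `q + 1`. -/

theorem Finset.sum_range_choose_succ_mul {R : Type*} [Semiring R] (n : ℕ) (f : ℕ → R) :
    ∑ i ∈ Finset.range (n + 2), ((n + 1).choose i : R) * f i
      = ∑ i ∈ Finset.range (n + 1), (n.choose i : R) * f i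
        + ∑ i ∈ Finset.range (n + 1), (n.choose i : R) * f (i + 1) := by
  rw [Finset.sum_range_succ' _ (n + 1), Finset.sum_range_succ' (fun i => (n.choose i : R) * f i)]
  simp only [Nat.choose_succ_succ, Nat.cast_add, add_mul, Finset.sum_add_distrib,
    Nat.choose_zero_right, Finset.sum_range_succ (fun i => (n.choose (i + 1) : R) * f (i + 1)) n,
    Nat.choose_succ_self, Nat.cast_zero, zero_mul, add_zero]
  abel

section Symmetric

variable {μ : Measure ℝ} [NullSingletonClass μ]

theorem setLIntegral_Iic_zero_eq_Ioi_zero (hμ : μ.map Neg.neg = μ) {f : ℝ → ℝ≥0∞}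
    (hf : Measurable f) (heven : ∀ x, f (-x) = f x) :
    ∫⁻ x in Set.Iic 0, f x ∂μ = ∫⁻ x in Set.Ioi 0, f x ∂μ := by
  rw [setLIntegral_congr Iio_ae_eq_Iic.symm]
  conv_lhs => rw [← hμ]
  rw [setLIntegral_map measurableSet_Iio hf measurable_neg]
  simp [heven]

theorem setLIntegral_Ioi_zero_eq_half (hμ : μ.map Neg.neg = μ) {f : ℝ → ℝ≥0∞}
    (hf : Measurable f) (heven : ∀ x, f (-x) = f x) :
    ∫⁻ x in Set.Ioi 0, f x ∂μ = 2⁻¹ * ∫⁻ x, f x ∂μ := by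
  rw [← lintegral_add_compl (μ := μ) f (measurableSet_Iic (a := 0)), Set.compl_Iic,
    setLIntegral_Iic_zero_eq_Ioi_zero hμ hf heven, ← two_mul, ← mul_assoc,
    ENNReal.inv_mul_cancel two_ne_zero ENNReal.ofNat_ne_top, one_mul]

theorem measure_Iic_zero_eq_half (hμ : μ.map Neg.neg = μ) :
    μ (Set.Iic 0) = 2⁻¹ * μ Set.univ := by
  have h := setLIntegral_Ioi_zero_eq_half hμ (f := fun _ => 1) measurable_const (fun _ => rfl)
  rw [← setLIntegral_Iic_zero_eq_Ioi_zero hμ measurable_const (fun _ => rfl)] at h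
  simpa using h

end Symmetric

theorem gaussianReal_zero_map_neg (v : ℝ≥0) :
    (gaussianReal 0 v).map Neg.neg = gaussianReal 0 v := by
  simpa using gaussianReal_map_neg (μ := 0) (v := v)

theorem monotone_measure_Iic {α : Type*} [Preorder α] [MeasurableSpace α] (μ : Measure α) :
    Monotone fun c => μ (Set.Iic c) :=
  fun _ _ h => measure_mono (Set.Iic_subset_Iic.2 h)

theorem measure_pi_sum_le_succ {α : Type*} [MeasurableSpace α] (μ : Measure α) [SigmaFinite μ]
    {f : α → ℝ} (hf : Measurable f) (k : ℕ) (c : ℝ) :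
    Measure.pi (fun _ : Fin (k + 1) => μ) {x | ∑ i, f (x i) ≤ c}
      = ∫⁻ t, Measure.pi (fun _ : Fin k => μ) {z | ∑ j, f (z j) ≤ c - f t} ∂μ := by
  have hmp := (measurePreserving_piFinSuccAbove (fun _ : Fin (k + 1) => μ) 0).symm
  have hm : MeasurableSet {x : Fin (k + 1) → α | ∑ i, f (x i) ≤ c} :=
    measurableSet_le (by fun_prop) measurable_const
  rw [← hmp.measure_preimage hm.nullMeasurableSet,
    Measure.prod_apply (hm.preimage (MeasurableEquiv.measurable _))]
  refine lintegral_congr fun t => congrArg _ (Set.ext fun z => ?_)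
  simp [Fin.sum_univ_succ, Fin.insertNthEquiv, Fin.insertNth_zero', le_sub_iff_add_le']

instance (k : ℕ) : IsProbabilityMeasure (chiSqMeasure k) :=
  Measure.isProbabilityMeasure_map (Measurable.aemeasurable (by fun_prop))

theorem chiSqMeasure_Iic (k : ℕ) (c : ℝ) :
    chiSqMeasure k (Set.Iic c)
      = Measure.pi (fun _ : Fin k => gaussianReal 0 1) {y | ∑ j, y j ^ 2 ≤ c} :=
  Measure.map_apply (by fun_prop) measurableSet_Iic

theorem chiSqMeasure_succ_Iic (k : ℕ) (c : ℝ) :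
    chiSqMeasure (k + 1) (Set.Iic c)
      = ∫⁻ t, chiSqMeasure k (Set.Iic (c - t ^ 2)) ∂gaussianReal 0 1 := by
  simp only [chiSqMeasure_Iic]
  exact measure_pi_sum_le_succ _ (measurable_id.pow_const 2) k c

theorem measurePreserving_sqrt_mul_gaussianReal {v : ℝ} (hv : 0 ≤ v) :
    MeasurePreserving (Real.sqrt v * ·) (gaussianReal 0 1) (gaussianReal 0 v.toNNReal) := by
  refine ⟨measurable_const_mul _, ?_⟩
  rw [gaussianReal_map_const_mul, mul_zero]
  congr
  ext
  simp [Real.sq_sqrt hv, hv]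

theorem measure_pi_gaussianReal_sum_posPart_sq_div {ι : Type*} [Fintype ι] {v : ι → ℝ}
    (hv : ∀ i, 0 < v i) (c : ℝ) :
    Measure.pi (fun i => gaussianReal 0 (v i).toNNReal) {x | ∑ i, max 0 (x i) ^ 2 / v i ≤ c}
      = Measure.pi (fun _ : ι => gaussianReal 0 1) {x | ∑ i, max 0 (x i) ^ 2 ≤ c} := by
  have hmp := measurePreserving_pi _ _ fun i => measurePreserving_sqrt_mul_gaussianReal (hv i).le
  rw [← hmp.measure_preimage (measurableSet_le (by fun_prop) measurable_const).nullMeasurableSet]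
  congr 1
  ext x
  have hscale : ∀ i, max 0 (Real.sqrt (v i) * x i) ^ 2 / v i = max 0 (x i) ^ 2 := fun i => by
    have hmax := mul_max_of_nonneg 0 (x i) (Real.sqrt_nonneg (v i))
    rw [mul_zero] at hmax
    rw [← hmax, mul_pow, Real.sq_sqrt (hv i).le, mul_div_cancel_left₀ _ (hv i).ne']
  simp only [Set.mem_preimage, Set.mem_ofPred_eq, hscale]

noncomputable def chiBarSqCDF (q : ℕ) (c : ℝ) : ℝ≥0∞ :=
  Measure.pi (fun _ : Fin q => gaussianReal 0 1) {x | ∑ i, max 0 (x i) ^ 2 ≤ c}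

theorem chiBarSqCDF_mono (q : ℕ) : Monotone (chiBarSqCDF q) :=
  fun _ _ h => measure_mono fun _ hx => le_trans hx h

theorem chiBarSqCDF_succ (q : ℕ) (c : ℝ) :
    chiBarSqCDF (q + 1) c
      = 2⁻¹ * chiBarSqCDF q c + 2⁻¹ * ∫⁻ t, chiBarSqCDF q (c - t ^ 2) ∂gaussianReal 0 1 := by
  rw [chiBarSqCDF, measure_pi_sum_le_succ _ (by fun_prop : Measurable fun x : ℝ => max 0 x ^ 2),
    ← lintegral_add_compl _ (measurableSet_Iic (a := 0)), Set.compl_Iic]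
  have := nullSingletonClass_gaussianReal (μ := 0) one_ne_zero
  congr 1
  · rw [setLIntegral_congr_fun (g := fun _ => chiBarSqCDF q c) measurableSet_Iic
        fun t (ht : t ≤ 0) => by simp [chiBarSqCDF, ht],
      setLIntegral_const, measure_Iic_zero_eq_half (gaussianReal_zero_map_neg 1), measure_univ,
      mul_one, mul_comm]
  · rw [setLIntegral_congr_fun (g := fun t => chiBarSqCDF q (c - t ^ 2)) measurableSet_Ioi
        fun t (ht : 0 < t) => by simp [chiBarSqCDF, ht.le]]
    exact setLIntegral_Ioi_zero_eq_half (gaussianReal_zero_map_neg 1)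
      ((chiBarSqCDF_mono q).measurable.comp (by fun_prop)) (by simp)

theorem chiBarSqCDF_eq_sum_chiSqMeasure (q : ℕ) (c : ℝ) :
    chiBarSqCDF q c
      = 2⁻¹ ^ q *
          ∑ i ∈ Finset.range (q + 1), (q.choose i : ℝ≥0∞) * chiSqMeasure i (Set.Iic c) := by
  induction q generalizing c with
  | zero => simp [chiBarSqCDF, chiSqMeasure_Iic]
  | succ q ih =>
    have hmeas : ∀ i, Measurable fun t : ℝ => chiSqMeasure i (Set.Iic (c - t ^ 2)) := fun i =>
      (monotone_measure_Iic _).measurable.comp (by fun_prop)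
    simp_rw [chiBarSqCDF_succ, ih]
    rw [lintegral_const_mul _ (by fun_prop), lintegral_finsetSum _ (by fun_prop)]
    simp_rw [lintegral_const_mul _ (hmeas _), ← chiSqMeasure_succ_Iic,
      Finset.sum_range_choose_succ_mul, pow_succ]
    ring

/-- If `W` is a `q`-dimensional centered Gaussian vector with diagonal
nonsingular covariance `Σ_q = diag(σ₁², …, σ_q²)` (so that its law is the product of the
one-dimensional Gaussians `N(0, σᵢ²)`), then
`T = (0 ∨ W)ᵀ Σ_q⁻¹ (0 ∨ W) = ∑ᵢ (max 0 Wᵢ)²/σᵢ²` is distributed as the chi-square mixture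
`∑_{i=0}^q binom(q,i) 2^{-q} χ²ᵢ`: for every `c ≥ 0`,
`P(T ≤ c) = ∑_{i=0}^q binom(q,i) 2^{-q} P(χ²ᵢ ≤ c)`. -/
theorem one_sided_diagonal_chi_square_mixture
    (q : ℕ) (v : Fin q → ℝ) (hv : ∀ i, 0 < v i) :
    ∀ c : ℝ, 0 ≤ c →
      ((Measure.pi fun i : Fin q => gaussianReal 0 (Real.toNNReal (v i)))
          {x | ∑ i, max 0 (x i) ^ 2 / v i ≤ c}).toReal
        = ∑ i ∈ Finset.range (q + 1),
            (q.choose i : ℝ) * (2 : ℝ) ^ (-(q : ℤ)) *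
              ((chiSqMeasure i) (Set.Iic c)).toReal := by
  intro c _
  rw [measure_pi_gaussianReal_sum_posPart_sq_div hv, ← chiBarSqCDF,
    chiBarSqCDF_eq_sum_chiSqMeasure, ENNReal.toReal_mul,
    ENNReal.toReal_sum fun i _ => ENNReal.mul_ne_top (by simp) (measure_ne_top _ _),
    Finset.mul_sum]
  refine Finset.sum_congr rfl fun i _ => ?_
  simp only [ENNReal.toReal_mul, ENNReal.toReal_pow, ENNReal.toReal_inv, ENNReal.toReal_natCast,
    ENNReal.toReal_ofNat, zpow_neg, zpow_natCast, inv_pow]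
  ring
end
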